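/- Let n be even and let A be a transitive abelian permutation group of order n with A ≤ Alt(n), and suppose A is not an elementary abelian 2-group. Let G = D(A) act on the n left cosets of H = ⟨x⟩. Then α(Γ_G) = 2 and there exists an inverse-closed subset D ⊆ Der(G) such that α(Cay(G, Der(G) \ D)) = 3. -/

import Mathlib

/-- The Cayley graph of a group `Γ` with (inverse-closed) connection set `C`:
`g` and `h` are adjacent iff they are distinct and `g⁻¹ * h ∈ C` (symmetrized). -/
def cayley (Γ : Type*) [Group Γ] (C : Set Γ) : SimpleGraph Γ where
  Adj g h := g ≠ h ∧ g⁻¹ * h ∈ C ∧ h⁻¹ * g ∈ C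
  symm := ⟨fun _ _ ⟨hne, h1, h2⟩ => ⟨hne.symm, h2, h1⟩⟩
  loopless := ⟨fun _ ⟨hne, _⟩ => hne rfl⟩

/-- A set of vertices of a graph is independent if its elements are pairwise non-adjacent. -/
def IsIndepSet {V : Type*} (X : SimpleGraph V) (s : Set V) : Prop :=
  s.Pairwise fun a b => ¬ X.Adj a b

/-- The independence number of a graph: the maximum size of an independent set. -/
noncomputable def indepNum {V : Type*} (X : SimpleGraph V) : ℕ :=
  sSup {k | ∃ s : Finset V, IsIndepSet X ↑s ∧ s.card = k}

/-- The set of derangements of a permutation group `G ≤ Sym(n)`: the elements of `G`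
fixing no point of `{1,…,n}`. -/
def der {n : ℕ} (G : Subgroup (Equiv.Perm (Fin n))) : Set G :=
  {σ : G | ∀ i : Fin n, (σ : Equiv.Perm (Fin n)) i ≠ i}
/-- The set of derangements of the action of `G` on the left cosets of `H`:
the elements of `G` fixing no coset. -/
def derQ (G : Type*) [Group G] (H : Subgroup G) : Set G :=
  {g : G | ∀ c : G ⧸ H, g • c ≠ c}


/-!
The non-derangements of `D(A)` on the cosets of `⟨x⟩ = {1, x}` are `1` and the conjugates
`x a²` (`a ∈ A`) of `x`. So any two vertices of an independent set of `Γ_G` differ by an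
element of `xA`, which rules out three of them, while `{1, x}` is independent.

For the second part, the sign condition forces `A` to contain two distinct involutions
(otherwise translation by an element of maximal `2`-power order is an odd permutation), so
`A²` has index at least `4` in `A`. Pick `d ∈ A \ A²` with `d² ≠ 1` and `e ∈ A` with
`e, ed ∉ A²`, and remove `D = {d, d⁻¹, xe, xed}`; then `{1, d, xe}` is independent. In an
independent set, quotients within a coset of `A` lie in `{d, d⁻¹}`, so each coset holds at
most two vertices, and quotients across the cosets lie in `xW` with `W = A² ∪ {e, ed}`. No
`w ∈ W` has both `wd` and `wd⁻¹` in `W`, so two vertices in each coset would force `d² = 1`.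
-/

theorem indepNum_eq_of_isIndepSet {V : Type*} {X : SimpleGraph V} {k : ℕ} (s : Finset V)
    (hs : IsIndepSet X ↑s) (hcard : s.card = k)
    (hle : ∀ t : Finset V, IsIndepSet X ↑t → t.card ≤ k) : indepNum X = k := by
  have hmem : k ∈ {k | ∃ s : Finset V, IsIndepSet X ↑s ∧ s.card = k} := ⟨s, hs, hcard⟩
  have hub : ∀ n ∈ {k | ∃ s : Finset V, IsIndepSet X ↑s ∧ s.card = k}, n ≤ k := by
    rintro n ⟨t, ht, rfl⟩
    exact hle t ht
  exact le_antisymm (csSup_le ⟨k, hmem⟩ hub) (le_csSup ⟨k, hub⟩ hmem)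

theorem isIndepSet_cayley_iff {Γ : Type*} [Group Γ] {C : Set Γ} (hC : ∀ c ∈ C, c⁻¹ ∈ C)
    {s : Set Γ} : IsIndepSet (cayley Γ C) s ↔ s.Pairwise fun g h => g⁻¹ * h ∉ C := by
  refine forall₄_congr fun g _ h _ => imp_congr_right fun hne => ?_
  refine ⟨fun hadj hC' => hadj ⟨hne, hC', ?_⟩, fun hgh hadj => hgh hadj.2.1⟩
  simpa using hC _ hC'

section Derangements

variable {G : Type*} [Group G] (H : Subgroup G)

theorem inv_mem_derQ {g : G} (hg : g ∈ derQ G H) : g⁻¹ ∈ derQ G H :=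
  fun c hc => hg (g⁻¹ • c) (by rw [smul_inv_smul, hc])

theorem notMem_derQ_iff {g : G} : g ∉ derQ G H ↔ ∃ b : G, b⁻¹ * g * b ∈ H := by
  simp only [derQ, Set.mem_ofPred_eq, not_forall, not_not]
  constructor
  · rintro ⟨c, hc⟩
    obtain ⟨b, rfl⟩ := QuotientGroup.mk_surjective c
    rw [MulAction.Quotient.smul_mk, smul_eq_mul, QuotientGroup.eq] at hc
    exact ⟨b, by simpa [mul_assoc] using H.inv_mem hc⟩
  · rintro ⟨b, hb⟩
    refine ⟨(b : G ⧸ H), ?_⟩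
    rw [MulAction.Quotient.smul_mk, smul_eq_mul, QuotientGroup.eq]
    simpa [mul_assoc] using H.inv_mem hb

end Derangements

section Quotients

variable {G : Type*} [Group G]

theorem Subgroup.card_le_two_of_pairwise_inv_mul_notMem {A : Subgroup G} (hA : A.index = 2)
    {s : Finset G} (hs : (s : Set G).Pairwise fun p q => p⁻¹ * q ∉ A) : s.card ≤ 2 := by
  by_contra! h
  obtain ⟨p, hp, q, hq, r, hr, hpq, hpr, hqr⟩ := Finset.two_lt_card.mp h
  refine hs hq hr hqr ?_
  rw [show q⁻¹ * r = (p⁻¹ * q)⁻¹ * (p⁻¹ * r) by group, A.mul_mem_iff_of_index_two hA,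
    inv_mem_iff]
  exact iff_of_false (hs hp hq hpq) (hs hp hr hpr)

theorem card_le_two_of_pairwise_inv_mul_eq {d : G} (hd1 : d ≠ 1) (hd3 : d ^ 3 ≠ 1)
    {s : Finset G} (hs : (s : Set G).Pairwise fun p q => p⁻¹ * q = d ∨ p⁻¹ * q = d⁻¹) :
    s.card ≤ 2 := by
  by_contra! h
  obtain ⟨p, hp, q, hq, r, hr, hpq, hpr, hqr⟩ := Finset.two_lt_card.mp h
  have hsq : d * d ≠ d⁻¹ := fun h => hd3 (by rw [pow_succ, sq, h, inv_mul_cancel])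
  have hsq' : d⁻¹ * d⁻¹ ≠ d := by rwa [← mul_inv_rev, Ne, inv_eq_iff_eq_inv]
  have hne : p⁻¹ * q ≠ p⁻¹ * r := fun h => hqr (mul_left_cancel h)
  have h3 : q⁻¹ * r = d ∨ q⁻¹ * r = d⁻¹ := hs hq hr hqr
  rw [show q⁻¹ * r = (p⁻¹ * q)⁻¹ * (p⁻¹ * r) by group] at h3
  rcases hs hp hq hpq with h1 | h1 <;> rcases hs hp hr hpr with h2 | h2 <;>
    rw [h1, h2] at h3 hne <;> simp_all

theorem eq_of_mul_mem_of_mul_mem {Q : Subgroup G} {d e : G} (hdQ : d ∉ Q) (hd2Q : d ^ 2 ∈ Q)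
    (hd2 : d ^ 2 ≠ 1) (heQ : e ∉ Q) (hedQ : e * d ∉ Q) {w r r' : G}
    (hw : w ∈ (Q : Set G) ∪ {e, e * d}) (hr : r = d ∨ r = d⁻¹) (hr' : r' = d ∨ r' = d⁻¹)
    (h : w * r ∈ (Q : Set G) ∪ {e, e * d}) (h' : w * r' ∈ (Q : Set G) ∪ {e, e * d}) :
    r = r' := by
  suffices key : w * d ∈ (Q : Set G) ∪ {e, e * d} → w * d⁻¹ ∈ (Q : Set G) ∪ {e, e * d} → False by
    rcases hr with rfl | rfl <;> rcases hr' with rfl | rfl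
    exacts [rfl, (key h h').elim, (key h' h).elim, rfl]
  intro h1 h2
  have hd1 : d ≠ 1 := fun h => hdQ (h ▸ Q.one_mem)
  have hd2' : d * d ≠ 1 := by rwa [← sq]
  simp only [Set.mem_union, SetLike.mem_coe, Set.mem_insert_iff, Set.mem_singleton_iff] at hw h1 h2
  rcases hw with hw | hw | hw
  · rcases h2 with h2 | h2 | h2
    · exact hdQ (inv_mem_iff.mp ((Q.mul_mem_cancel_left hw).mp h2))
    · exact hedQ (by rwa [← h2, inv_mul_cancel_right])
    · refine heQ ?_
      rw [← mul_inv_cancel_right e d, ← h2, mul_assoc, ← mul_inv_rev, ← sq]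
      exact Q.mul_mem hw (Q.inv_mem hd2Q)
  · subst w
    rcases h2 with h2 | h2 | h2
    · exact hedQ (by rw [show e * d = e * d⁻¹ * d ^ 2 by group]; exact Q.mul_mem h2 hd2Q)
    · exact hd1 (inv_eq_one.mp (mul_eq_left.mp h2))
    · exact hd2' (mul_eq_one_iff_eq_inv.mpr (mul_left_cancel h2).symm)
  · subst w
    rcases h1 with h1 | h1 | h1
    · exact heQ (by rwa [mul_assoc, ← sq, Q.mul_mem_cancel_right hd2Q] at h1)
    · exact hd2' (mul_eq_left.mp (by rwa [mul_assoc] at h1))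
    · exact hd1 (mul_eq_left.mp h1)

end Quotients

section Sign

open Equiv

theorem sign_toPermHom_quotient_of_isComplement' {G : Type*} [Group G] {A H : Subgroup G}
    (hAH : A.IsComplement' H) [Fintype (G ⧸ H)] [DecidableEq (G ⧸ H)] [Fintype A]
    [DecidableEq A] (a : A) :
    Perm.sign (MulAction.toPermHom G (G ⧸ H) a) = Perm.sign (MulAction.toPermHom A A a) := by
  let e : A ≃ G ⧸ H := hAH.leftQuotientEquiv.symm
  have he : MulAction.toPermHom G (G ⧸ H) a = e.permCongr (MulAction.toPermHom A A a) := by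
    ext q
    obtain ⟨c, rfl⟩ := e.surjective q
    rw [permCongr_apply, symm_apply_apply]
    rfl
  rw [he, Perm.sign_permCongr]

variable {K : Type*} [CommGroup K]

/-- Unlike `Subgroup.groupEquivQuotientProdSubgroup`, this splitting turns left multiplication
by an element of `B` into left multiplication on the second factor. -/
noncomputable def equivQuotientProdSubgroup (B : Subgroup K) : K ≃ (K ⧸ B) × B where
  toFun g := ((g : K ⧸ B), ⟨(g : K ⧸ B).out⁻¹ * g, QuotientGroup.eq.mp (QuotientGroup.out_eq' _)⟩)
  invFun p := p.1.out * p.2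
  left_inv g := mul_inv_cancel_left _ g
  right_inv := by
    rintro ⟨q, b⟩
    have hq : ((q.out * b : K) : K ⧸ B) = q := by
      rw [QuotientGroup.mk_mul, QuotientGroup.out_eq', (QuotientGroup.eq_one_iff _).mpr b.2,
        mul_one]
    ext <;> simp [hq]

theorem isCycle_toPermHom_zpowers {b : K} (hb : b ≠ 1) :
    (MulAction.toPermHom (Subgroup.zpowers b) (Subgroup.zpowers b)
      ⟨b, Subgroup.mem_zpowers b⟩).IsCycle := by
  refine ⟨1, by simpa [Subtype.ext_iff] using hb, fun y _ => ?_⟩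
  obtain ⟨n, hn⟩ := y.2
  refine ⟨n, ?_⟩
  rw [← map_zpow (MulAction.toPermHom (Subgroup.zpowers b) (Subgroup.zpowers b))]
  exact Subtype.ext (by simpa using hn)

theorem sign_toPermHom_self [Fintype K] [DecidableEq K] {b : K} (hb : b ≠ 1) :
    Perm.sign (MulAction.toPermHom K K b) =
      (-(-1) ^ orderOf b) ^ Nat.card (K ⧸ Subgroup.zpowers b) := by
  set B := Subgroup.zpowers b
  set σ := MulAction.toPermHom B B ⟨b, Subgroup.mem_zpowers b⟩
  have hσ : Perm.sign σ = -(-1) ^ orderOf b := by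
    have hsupp : σ.support = Finset.univ := by
      ext y
      simpa [σ, Subtype.ext_iff] using hb
    rw [(isCycle_toPermHom_zpowers hb).sign, hsupp, Finset.card_univ, ← Nat.card_eq_fintype_card,
      Nat.card_zpowers]
  have hsplit : MulAction.toPermHom K K b =
      (equivQuotientProdSubgroup B).symm.permCongr (prodCongrRight fun _ => σ) := by
    ext g
    simp [equivQuotientProdSubgroup, σ, mul_left_comm]
  rw [hsplit, Perm.sign_permCongr, Perm.sign_prodCongrRight, Finset.prod_const, hσ,
    Finset.card_univ, Nat.card_eq_fintype_card]

end Sign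

section CommGroup

variable {K : Type*} [CommGroup K]

theorem exists_orderOf_eq_two_pow_maximal [Finite K] (heven : Even (Nat.card K)) :
    ∃ b : K, ∃ k, 1 ≤ k ∧ orderOf b = 2 ^ k ∧ ∀ c : K, orderOf c ≠ 2 ^ (k + 1) := by
  classical
  have := Fintype.ofFinite K
  obtain ⟨t, ht⟩ := exists_prime_orderOf_dvd_card' 2 heven.two_dvd
  let T := Finset.univ.filter fun c : K => ∃ j, orderOf c = 2 ^ j
  have htT : t ∈ T := Finset.mem_filter.mpr ⟨Finset.mem_univ t, 1, by rw [ht, pow_one]⟩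
  obtain ⟨b, hbT, hmax⟩ := T.exists_max_image orderOf ⟨t, htT⟩
  obtain ⟨k, hk⟩ := (Finset.mem_filter.mp hbT).2
  refine ⟨b, k, ?_, hk, fun c hc => ?_⟩
  · have := hmax t htT
    rw [ht, hk] at this
    exact Nat.one_le_iff_ne_zero.mpr (by rintro rfl; simp at this)
  · have := hmax c (Finset.mem_filter.mpr ⟨Finset.mem_univ c, _, hc⟩)
    rw [hc, hk] at this
    exact absurd this (Nat.pow_lt_pow_right one_lt_two (Nat.lt_succ_self k)).not_ge

theorem exists_sq_eq_one_notMem_zpowers [Finite K] {b : K} {k : ℕ} (hk : 1 ≤ k)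
    (hb : orderOf b = 2 ^ k) (hmax : ∀ c : K, orderOf c ≠ 2 ^ (k + 1))
    (heven : Even (Nat.card (K ⧸ Subgroup.zpowers b))) :
    ∃ u ∉ Subgroup.zpowers b, u ^ 2 = 1 := by
  obtain ⟨q, hq⟩ := exists_prime_orderOf_dvd_card' 2 heven.two_dvd
  obtain ⟨c, rfl⟩ := QuotientGroup.mk_surjective q
  have hcB : c ∉ Subgroup.zpowers b := by
    rw [← QuotientGroup.eq_one_iff]
    rintro h
    simp [h] at hq
  have hc2 : c ^ 2 ∈ Subgroup.zpowers b := by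
    rw [← QuotientGroup.eq_one_iff, QuotientGroup.mk_pow, ← hq, pow_orderOf_eq_one]
  obtain ⟨j, hj⟩ := Subgroup.mem_zpowers_iff.mp hc2
  obtain ⟨i, rfl | rfl⟩ := Int.even_or_odd' j
  · refine ⟨c * b ^ (-i), fun h => hcB ?_, ?_⟩
    · simpa using mul_mem h (Subgroup.zpow_mem _ (Subgroup.mem_zpowers b) i)
    · rw [mul_pow, ← hj, ← zpow_natCast, ← zpow_mul]
      group
  · exfalso
    set c' := c * b ^ (-i)
    have hc' : c' ^ 2 = b := by
      rw [mul_pow, ← hj, ← zpow_natCast, ← zpow_mul]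
      group
    refine hmax c' (orderOf_eq_prime_pow ?_ ?_)
    · rw [show 2 ^ k = 2 * 2 ^ (k - 1) by rw [← pow_succ']; congr 1; omega, pow_mul, hc']
      exact pow_ne_one_of_lt_orderOf (by positivity)
        (hb ▸ Nat.pow_lt_pow_right one_lt_two (by omega))
    · rw [pow_succ', pow_mul, hc', ← hb, pow_orderOf_eq_one]

theorem four_le_card_ker_powMonoidHom_two_of_sq_eq_one [Finite K] {u t : K} (hu : u ^ 2 = 1)
    (ht : t ^ 2 = 1) (hu1 : u ≠ 1) (ht1 : t ≠ 1) (hut : u ≠ t) :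
    4 ≤ Nat.card (powMonoidHom 2 : K →* K).ker := by
  classical
  have hcard : ({1, u, t, u * t} : Finset K).card = 4 := by
    have h1 : u * t ≠ 1 := fun h => hut (mul_right_cancel (h.trans ((sq t).symm.trans ht).symm))
    have h2 : u * t ≠ u := fun h => ht1 (mul_eq_left.mp h)
    have h3 : u * t ≠ t := fun h => hu1 (mul_eq_right.mp h)
    simp [Finset.card_insert_of_notMem, hut, hu1.symm, ht1.symm, h1.symm, h2.symm, h3.symm]
  have hsub : (({1, u, t, u * t} : Finset K) : Set K) ⊆ (powMonoidHom 2 : K →* K).ker := by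
    intro g hg
    simp only [Finset.coe_insert, Finset.coe_singleton, Set.mem_insert_iff,
      Set.mem_singleton_iff] at hg
    rcases hg with rfl | rfl | rfl | rfl <;> simp [mul_pow, hu, ht]
  calc 4 = (({1, u, t, u * t} : Finset K) : Set K).ncard := by rw [Set.ncard_coe_finset, hcard]
    _ ≤ ((powMonoidHom 2 : K →* K).ker : Set K).ncard := Set.ncard_le_ncard hsub
    _ = Nat.card (powMonoidHom 2 : K →* K).ker := Nat.card_coe_set_eq _

theorem four_le_card_ker_powMonoidHom_two [Fintype K] [DecidableEq K]
    (heven : Even (Nat.card K))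
    (hsign : ∀ a : K, Equiv.Perm.sign (MulAction.toPermHom K K a) = 1) :
    4 ≤ Nat.card (powMonoidHom 2 : K →* K).ker := by
  obtain ⟨b, k, hk, hb, hmax⟩ := exists_orderOf_eq_two_pow_maximal heven
  have hb1 : b ≠ 1 := by
    rintro rfl
    rw [orderOf_one] at hb
    have := Nat.one_lt_two_pow (n := k) (by omega)
    omega
  have hquot : Even (Nat.card (K ⧸ Subgroup.zpowers b)) := by
    have := hsign b
    rw [sign_toPermHom_self hb1, hb, (Nat.even_pow.mpr ⟨even_two, by omega⟩).neg_one_pow] at this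
    by_contra hodd
    rw [(Nat.not_even_iff_odd.mp hodd).neg_one_pow] at this
    exact absurd this (by decide)
  obtain ⟨u, huB, hu⟩ := exists_sq_eq_one_notMem_zpowers hk hb hmax hquot
  set t := b ^ 2 ^ (k - 1)
  have ht : t ^ 2 = 1 := by
    rw [← pow_mul, ← pow_succ, Nat.sub_add_cancel hk, ← hb, pow_orderOf_eq_one]
  have ht1 : t ≠ 1 :=
    pow_ne_one_of_lt_orderOf (by positivity) (hb ▸ Nat.pow_lt_pow_right one_lt_two (by omega))
  exact four_le_card_ker_powMonoidHom_two_of_sq_eq_one hu ht (fun h => huB (h ▸ one_mem _)) ht1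
    fun h => huB (h ▸ Subgroup.pow_mem _ (Subgroup.mem_zpowers b) _)

theorem Subgroup.exists_notMem_sq_ne_one {Q : Subgroup K} (hQ : Q ≠ ⊤) {a : K} (ha : a ^ 2 ≠ 1) :
    ∃ d ∉ Q, d ^ 2 ≠ 1 := by
  by_cases haQ : a ∈ Q
  · obtain ⟨s, hs⟩ := SetLike.exists_not_mem_of_ne_top Q hQ
    by_cases hs2 : s ^ 2 = 1
    · exact ⟨s * a, fun h => hs ((Q.mul_mem_cancel_right haQ).mp h),
        by rwa [mul_pow, hs2, one_mul]⟩
    · exact ⟨s, hs, hs2⟩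
  · exact ⟨a, haQ, ha⟩

theorem Subgroup.exists_notMem_and_mul_notMem {Q : Subgroup K} (hQ : 3 ≤ Q.index) (g : K) :
    ∃ e ∉ Q, e * g ∉ Q := by
  by_contra! h
  have hsurj : Function.Surjective
      fun b : Bool => if b then (1 : K ⧸ Q) else ((g⁻¹ : K) : K ⧸ Q) := by
    intro q
    obtain ⟨e, rfl⟩ := QuotientGroup.mk_surjective q
    by_cases he : e ∈ Q
    · exact ⟨true, ((QuotientGroup.eq_one_iff e).mpr he).symm⟩
    · exact ⟨false, QuotientGroup.eq.mpr (by simpa [mul_comm] using h e he)⟩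
  have : Q.index ≤ 2 := by simpa [Subgroup.index] using Nat.card_le_card_of_surjective _ hsurj
  omega

end CommGroup

open scoped IsMulCommutative in
def Subgroup.squares {G : Type*} [Group G] (A : Subgroup G) [IsMulCommutative A] : Subgroup G :=
  (powMonoidHom 2 : A →* A).range.map A.subtype

theorem Subgroup.mem_squares {G : Type*} [Group G] {A : Subgroup G} [IsMulCommutative A]
    {g : G} : g ∈ A.squares ↔ ∃ a ∈ A, a ^ 2 = g := by
  constructor
  · rintro ⟨_, ⟨a, rfl⟩, rfl⟩
    exact ⟨a, a.2, rfl⟩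
  · rintro ⟨a, ha, rfl⟩
    exact ⟨_, ⟨⟨a, ha⟩, rfl⟩, rfl⟩

structure IsGeneralizedDihedral {G : Type*} [Group G] (A : Subgroup G) (x : G) : Prop where
  index_eq_two : A.index = 2
  notMem : x ∉ A
  mul_mul_eq_inv : ∀ a ∈ A, x * a * x = a⁻¹

namespace IsGeneralizedDihedral

variable {G : Type*} [Group G] {A : Subgroup G} {x : G} (hD : IsGeneralizedDihedral A x)
include hD

theorem mul_self : x * x = 1 := by
  simpa using hD.mul_mul_eq_inv 1 A.one_mem

theorem inv_eq : x⁻¹ = x := inv_eq_of_mul_eq_one_right hD.mul_self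

theorem inv_mul_eq_mul {a : G} (ha : a ∈ A) : a⁻¹ * x = x * a := by
  rw [← hD.mul_mul_eq_inv a ha, mul_assoc, hD.mul_self, mul_one]

theorem inv_mul_mul_eq {c : G} (hc : c ∈ A) : c⁻¹ * x * c = x * c ^ 2 := by
  rw [hD.inv_mul_eq_mul hc, mul_assoc, sq]

theorem mul_notMem {a : G} (ha : a ∈ A) : x * a ∉ A := fun h =>
  hD.notMem (by simpa using A.mul_mem h (A.inv_mem ha))

theorem exists_eq_mul_of_notMem {g : G} (hg : g ∉ A) : ∃ a ∈ A, g = x * a := by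
  refine ⟨x * g, ?_, by rw [← mul_assoc, hD.mul_self, one_mul]⟩
  rw [A.mul_mem_iff_of_index_two hD.index_eq_two]
  exact iff_of_false hD.notMem hg

theorem mul_inv {a : G} (ha : a ∈ A) : (x * a)⁻¹ = x * a := by
  rw [mul_inv_rev, hD.inv_eq, hD.inv_mul_eq_mul ha]

theorem mem_zpowers_iff {g : G} : g ∈ Subgroup.zpowers x ↔ g = 1 ∨ g = x := by
  have hx : orderOf x = 2 :=
    orderOf_eq_prime (by rw [sq, hD.mul_self]) (fun h => hD.notMem (h ▸ A.one_mem))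
  refine ⟨fun ⟨k, hk⟩ => ?_, by rintro (rfl | rfl); exacts [one_mem _, Subgroup.mem_zpowers _]⟩
  rw [← hk]
  dsimp only
  rw [← zpow_mod_orderOf, hx]
  rcases Int.emod_two_eq_zero_or_one k with h | h <;> simp [h]

theorem isComplement' : A.IsComplement' (Subgroup.zpowers x) := by
  refine Subgroup.isComplement'_of_disjoint_and_mul_eq_univ ?_ ?_
  · refine Subgroup.disjoint_def.mpr fun {g} hgA hgx => ?_
    exact (hD.mem_zpowers_iff.mp hgx).resolve_right (by rintro rfl; exact hD.notMem hgA)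
  · refine Set.eq_univ_iff_forall.mpr fun g => ?_
    by_cases hg : g ∈ A
    · exact ⟨g, hg, 1, one_mem _, mul_one g⟩
    · obtain ⟨c, hc, rfl⟩ := hD.exists_eq_mul_of_notMem hg
      exact ⟨c⁻¹, A.inv_mem hc, x, Subgroup.mem_zpowers x, hD.inv_mul_eq_mul hc⟩

theorem notMem_derQ_iff {g : G} :
    g ∉ derQ G (Subgroup.zpowers x) ↔ g = 1 ∨ ∃ a ∈ A, g = x * a ^ 2 := by
  rw [_root_.notMem_derQ_iff]
  constructor
  · rintro ⟨b, hb⟩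
    have hg : g = b * (b⁻¹ * g * b) * b⁻¹ := by group
    rcases hD.mem_zpowers_iff.mp hb with h | h
    · left
      rw [hg, h, mul_one, mul_inv_cancel]
    · right
      rw [h] at hg
      by_cases hbA : b ∈ A
      · refine ⟨b⁻¹, A.inv_mem hbA, ?_⟩
        rw [hg, ← hD.inv_mul_mul_eq (A.inv_mem hbA), inv_inv]
      · obtain ⟨c, hc, rfl⟩ := hD.exists_eq_mul_of_notMem hbA
        refine ⟨c, hc, ?_⟩
        rw [hg, hD.mul_inv hc, sq, mul_assoc (x * c) x, ← mul_assoc x x c, hD.mul_self, one_mul,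
          mul_assoc]
  · rintro (rfl | ⟨a, ha, rfl⟩)
    · exact ⟨1, by simp⟩
    · refine ⟨a⁻¹, ?_⟩
      rw [inv_inv, ← hD.inv_mul_mul_eq ha, show a * (a⁻¹ * x * a) * a⁻¹ = x by group]
      exact Subgroup.mem_zpowers x

theorem mem_derQ_of_mem {a : G} (ha : a ∈ A) (ha1 : a ≠ 1) :
    a ∈ derQ G (Subgroup.zpowers x) := by
  by_contra h
  obtain h | ⟨b, hb, rfl⟩ := hD.notMem_derQ_iff.mp h
  exacts [ha1 h, hD.mul_notMem (A.pow_mem hb 2) ha]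

theorem indepNum_cayley_derQ : indepNum (cayley G (derQ G (Subgroup.zpowers x))) = 2 := by
  classical
  have hC : ∀ g ∈ derQ G (Subgroup.zpowers x), g⁻¹ ∈ derQ G (Subgroup.zpowers x) :=
    fun g => inv_mem_derQ _
  have hx : x ∉ derQ G (Subgroup.zpowers x) :=
    hD.notMem_derQ_iff.mpr (Or.inr ⟨1, A.one_mem, by simp⟩)
  have hx1 : (1 : G) ≠ x := fun h => hD.notMem (h ▸ A.one_mem)
  refine indepNum_eq_of_isIndepSet {1, x} ?_ (Finset.card_pair hx1) fun s hs => ?_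
  · rw [isIndepSet_cayley_iff hC]
    simp [Set.pairwise_insert, hD.inv_eq, hx]
  · rw [isIndepSet_cayley_iff hC] at hs
    refine A.card_le_two_of_pairwise_inv_mul_notMem hD.index_eq_two fun p hp q hq hpq hA => ?_
    exact hs hp hq hpq (hD.mem_derQ_of_mem hA (by rwa [Ne, inv_mul_eq_one]))

section Commutative

variable [IsMulCommutative A]

/-- For `g = p⁻¹ q`, these are the four quotients between `{p, p r}` and `{q, q r'}`. -/
theorem sq_eq_one_of_four_cycle {d : G} {W : Set G} (hdA : d ∈ A) (hWA : W ⊆ A)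
    (hW : ∀ w ∈ W, ∀ r r', (r = d ∨ r = d⁻¹) → (r' = d ∨ r' = d⁻¹) → w * r ∈ W → w * r' ∈ W →
      r = r')
    {g r r' : G} (hr : r = d ∨ r = d⁻¹) (hr' : r' = d ∨ r' = d⁻¹) (h1 : ∃ w ∈ W, g = x * w)
    (h2 : ∃ w ∈ W, g * r' = x * w) (h3 : ∃ w ∈ W, r⁻¹ * g = x * w)
    (h4 : ∃ w ∈ W, r⁻¹ * g * r' = x * w) : d ^ 2 = 1 := by
  have hrA : r ∈ A := by rcases hr with rfl | rfl; exacts [hdA, A.inv_mem hdA]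
  have hmem : ∀ {g w'}, (∃ w ∈ W, g = x * w) → g = x * w' → w' ∈ W := by
    rintro g w' ⟨w, hw, rfl⟩ h
    rwa [← mul_left_cancel h]
  obtain ⟨w, hw, rfl⟩ := h1
  have hrw : r⁻¹ * (x * w) = x * (w * r) := by
    rw [← mul_assoc, hD.inv_mul_eq_mul hrA, mul_assoc, setLike_mul_comm hrA (hWA hw)]
  have h2' : w * r' ∈ W := hmem h2 (mul_assoc _ _ _)
  have h3' : w * r ∈ W := hmem h3 hrw
  have h4' : w * r * r' ∈ W := hmem h4 (by rw [hrw, mul_assoc])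
  have hrr' : r = r' := hW w hw r r' hr hr' h3' h2'
  have hrinv : r⁻¹ = d ∨ r⁻¹ = d⁻¹ := by rcases hr with rfl | rfl <;> simp
  have hr2 : r⁻¹ = r' := hW (w * r) h3' r⁻¹ r' hrinv hr' (by rwa [mul_inv_cancel_right]) h4'
  rw [← hrr', inv_eq_iff_mul_eq_one] at hr2
  rcases hr with rfl | rfl
  · rwa [sq]
  · rwa [sq, ← inv_inj, mul_inv_rev, inv_one]

theorem card_le_three {d : G} {W : Set G} (hdA : d ∈ A) (hd2 : d ^ 2 ≠ 1) (hd3 : d ^ 3 ≠ 1)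
    (hWA : W ⊆ A)
    (hW : ∀ w ∈ W, ∀ r r', (r = d ∨ r = d⁻¹) → (r' = d ∨ r' = d⁻¹) → w * r ∈ W → w * r' ∈ W →
      r = r')
    {s : Finset G}
    (hs : (s : Set G).Pairwise fun p q => p⁻¹ * q = d ∨ p⁻¹ * q = d⁻¹ ∨ ∃ w ∈ W, p⁻¹ * q = x * w) :
    s.card ≤ 3 := by
  classical
  have hd1 : d ≠ 1 := fun h => hd2 (by simp [h])
  have hsame : ∀ {p q}, (p ∈ A ↔ q ∈ A) → p⁻¹ * q ∈ A := fun h =>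
    (A.mul_mem_iff_of_index_two hD.index_eq_two).mpr (by rwa [inv_mem_iff])
  have hin : ∀ {p q}, p ∈ s → q ∈ s → p ≠ q → (p ∈ A ↔ q ∈ A) → p⁻¹ * q = d ∨ p⁻¹ * q = d⁻¹ :=
    fun hp hq hpq hA => (hs hp hq hpq).imp_right fun h => h.resolve_right
      fun ⟨w, hw, h⟩ => hD.mul_notMem (hWA hw) (h ▸ hsame hA)
  have hout : ∀ {p q}, p ∈ s → q ∈ s → p ∈ A → q ∉ A → ∃ w ∈ W, p⁻¹ * q = x * w := by
    intro p q hp hq hpA hqA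
    have hpq : p⁻¹ * q ∉ A := fun h => hqA (by simpa using A.mul_mem hpA h)
    rcases hs hp hq (fun h => hqA (h ▸ hpA)) with h | h | h
    exacts [(hpq (h ▸ hdA)).elim, (hpq (h ▸ A.inv_mem hdA)).elim, h]
  have hcoset : ∀ t ⊆ s, (∀ p ∈ t, ∀ q ∈ t, (p ∈ A ↔ q ∈ A)) → t.card ≤ 2 :=
    fun t hts htA => card_le_two_of_pairwise_inv_mul_eq hd1 hd3 fun p hp q hq hpq =>
      hin (hts hp) (hts hq) hpq (htA p hp q hq)
  by_contra! h4
  have hsplit := s.card_filter_add_card_filter_not (· ∈ A)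
  have hA2 := hcoset (s.filter (· ∈ A)) (s.filter_subset _) fun p hp q hq => by simp_all
  have hB2 := hcoset (s.filter (· ∉ A)) (s.filter_subset _) fun p hp q hq => by simp_all
  obtain ⟨p, p', hpp', hP⟩ := Finset.card_eq_two.mp (by omega : (s.filter (· ∈ A)).card = 2)
  obtain ⟨q, q', hqq', hQ⟩ := Finset.card_eq_two.mp (by omega : (s.filter (· ∉ A)).card = 2)
  simp only [Finset.ext_iff, Finset.mem_filter, Finset.mem_insert, Finset.mem_singleton] at hP hQ
  obtain ⟨⟨hp, hpA⟩, hp', hp'A⟩ := And.intro ((hP p).mpr (.inl rfl)) ((hP p').mpr (.inr rfl))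
  obtain ⟨⟨hq, hqA⟩, hq', hq'A⟩ := And.intro ((hQ q).mpr (.inl rfl)) ((hQ q').mpr (.inr rfl))
  refine hd2 (hD.sq_eq_one_of_four_cycle hdA hWA hW (g := p⁻¹ * q)
    (hin hp hp' hpp' (iff_of_true hpA hp'A)) (hin hq hq' hqq' (iff_of_false hqA hq'A))
    (hout hp hq hpA hqA) ?_ ?_ ?_)
  · simpa [mul_assoc] using hout hp hq' hpA hq'A
  · simpa [mul_assoc] using hout hp' hq hp'A hqA
  · simpa [mul_assoc] using hout hp' hq' hp'A hq'A

theorem mul_mem_derQ {a : G} (ha : a ∈ A) (haQ : a ∉ A.squares) :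
    x * a ∈ derQ G (Subgroup.zpowers x) := by
  by_contra h
  obtain h | ⟨b, hb, hab⟩ := hD.notMem_derQ_iff.mp h
  · exact hD.mul_notMem ha (h ▸ A.one_mem)
  · exact haQ (Subgroup.mem_squares.mpr ⟨b, hb, (mul_left_cancel hab).symm⟩)

theorem card_le_three_of_pairwise {d e : G} (hdA : d ∈ A) (heA : e ∈ A) (hdQ : d ∉ A.squares)
    (hd2 : d ^ 2 ≠ 1) (heQ : e ∉ A.squares) (hedQ : e * d ∉ A.squares) {s : Finset G}
    (hs : (s : Set G).Pairwise fun p q =>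
      p⁻¹ * q ∉ derQ G (Subgroup.zpowers x) \ {d, d⁻¹, x * e, x * (e * d)}) :
    s.card ≤ 3 := by
  have hd2Q : d ^ 2 ∈ A.squares := Subgroup.mem_squares.mpr ⟨d, hdA, rfl⟩
  have hd3 : d ^ 3 ≠ 1 := fun h => hdQ (by
    rw [show d = (d ^ 2) ^ 2 by rw [← pow_mul, pow_succ, h, one_mul]]
    exact pow_mem hd2Q 2)
  refine hD.card_le_three hdA hd2 hd3 (W := (A.squares : Set G) ∪ {e, e * d}) ?_
    (fun w hw r r' => eq_of_mul_mem_of_mul_mem hdQ hd2Q hd2 heQ hedQ hw)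
    fun p hp q hq hpq => ?_
  · rintro w (hw | rfl | rfl)
    · obtain ⟨a, ha, rfl⟩ := Subgroup.mem_squares.mp hw
      exact A.pow_mem ha 2
    exacts [heA, A.mul_mem heA hdA]
  · by_cases hD' : p⁻¹ * q ∈ ({d, d⁻¹, x * e, x * (e * d)} : Set G)
    · rcases hD' with h | h | h | h
      exacts [.inl h, .inr (.inl h), .inr (.inr ⟨e, .inr (.inl rfl), h⟩),
        .inr (.inr ⟨e * d, .inr (.inr rfl), h⟩)]
    · obtain h | ⟨a, ha, h⟩ := hD.notMem_derQ_iff.mp fun h => hs hp hq hpq ⟨h, hD'⟩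
      · exact (hpq (inv_mul_eq_one.mp h)).elim
      · exact .inr (.inr ⟨a ^ 2, .inl (Subgroup.mem_squares.mpr ⟨a, ha, rfl⟩), h⟩)

theorem exists_indepNum_cayley_diff_eq_three {d e : G} (hdA : d ∈ A) (heA : e ∈ A)
    (hdQ : d ∉ A.squares) (hd2 : d ^ 2 ≠ 1) (heQ : e ∉ A.squares) (hedQ : e * d ∉ A.squares) :
    ∃ D : Set G, D ⊆ derQ G (Subgroup.zpowers x) ∧ (∀ g ∈ D, g⁻¹ ∈ D) ∧
      indepNum (cayley G (derQ G (Subgroup.zpowers x) \ D)) = 3 := by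
  classical
  have hd1 : d ≠ 1 := fun h => hd2 (by simp [h])
  have hedA : e * d ∈ A := A.mul_mem heA hdA
  set D : Set G := {d, d⁻¹, x * e, x * (e * d)}
  have hDder : D ⊆ derQ G (Subgroup.zpowers x) := by
    rintro g (rfl | rfl | rfl | rfl)
    exacts [hD.mem_derQ_of_mem hdA hd1, hD.mem_derQ_of_mem (A.inv_mem hdA) (inv_ne_one.mpr hd1),
      hD.mul_mem_derQ heA heQ, hD.mul_mem_derQ hedA hedQ]
  have hDinv : ∀ g ∈ D, g⁻¹ ∈ D := by
    rintro g (rfl | rfl | rfl | rfl) <;> simp [D, hD.mul_inv heA, hD.mul_inv hedA]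
  have hC : ∀ g ∈ derQ G (Subgroup.zpowers x) \ D, g⁻¹ ∈ derQ G (Subgroup.zpowers x) \ D :=
    fun g hg => ⟨inv_mem_derQ _ hg.1, fun h => hg.2 (by simpa using hDinv _ h)⟩
  refine ⟨D, hDder, hDinv, indepNum_eq_of_isIndepSet {1, d, x * e} ?_ ?_ fun s hs => ?_⟩
  · have hdxe : d⁻¹ * (x * e) = x * (e * d) := by
      rw [← mul_assoc, hD.inv_mul_eq_mul hdA, mul_assoc, setLike_mul_comm hdA heA]
    rw [isIndepSet_cayley_iff hC]
    simp [Set.pairwise_insert, D, hdxe, hD.mul_inv heA, mul_assoc]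
  · have h1 : (1 : G) ≠ x * e := fun h => hD.mul_notMem heA (h ▸ A.one_mem)
    have h2 : d ≠ x * e := fun h => hD.mul_notMem heA (h ▸ hdA)
    simp [hd1.symm, h1, h2]
  · rw [isIndepSet_cayley_iff hC] at hs
    exact hD.card_le_three_of_pairwise hdA heA hdQ hd2 heQ hedQ hs

open scoped IsMulCommutative in
theorem exists_indepNum_cayley_diff_eq_three_of_sign [Fintype A] [DecidableEq A]
    (hEven : Even (Nat.card A)) (hA2 : ∃ a ∈ A, a ^ 2 ≠ 1)
    (hsign : ∀ a : A, Equiv.Perm.sign (MulAction.toPermHom A A a) = 1) :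
    ∃ D : Set G, D ⊆ derQ G (Subgroup.zpowers x) ∧ (∀ g ∈ D, g⁻¹ ∈ D) ∧
      indepNum (cayley G (derQ G (Subgroup.zpowers x) \ D)) = 3 := by
  set Q := (powMonoidHom 2 : A →* A).range
  have hQ : 3 ≤ Q.index := by
    have := four_le_card_ker_powMonoidHom_two hEven hsign
    rw [Subgroup.index_range]
    omega
  obtain ⟨a, haA, ha⟩ := hA2
  obtain ⟨d, hdQ, hd2⟩ := Subgroup.exists_notMem_sq_ne_one (Q := Q)
    (fun h => by rw [h, Subgroup.index_top] at hQ; omega) (a := ⟨a, haA⟩)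
    (by simpa [Subtype.ext_iff] using ha)
  obtain ⟨e, heQ, hedQ⟩ := Subgroup.exists_notMem_and_mul_notMem hQ d
  have hsq {b : A} : (b : G) ∈ A.squares ↔ b ∈ Q := Subgroup.mem_map_iff_mem A.subtype_injective
  exact hD.exists_indepNum_cayley_diff_eq_three d.2 e.2 (hsq.not.mpr hdQ)
    (by simpa [Subtype.ext_iff] using hd2) (hsq.not.mpr heQ) (hsq.not.mpr hedQ)

end Commutative

end IsGeneralizedDihedral

theorem stmt_17_general {G : Type*} [Group G] [Fintype G]
    (A : Subgroup G) (hcomm : ∀ a ∈ A, ∀ b ∈ A, a * b = b * a)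
    (hEven : Even (Nat.card A)) (hA2 : ∃ a ∈ A, a ^ 2 ≠ 1)
    (x : G) (hxA : x ∉ A) (hindex : A.index = 2)
    (hconj : ∀ a ∈ A, x * a * x = a⁻¹)
    [Fintype (G ⧸ Subgroup.zpowers x)] [DecidableEq (G ⧸ Subgroup.zpowers x)]
    (hAlt : ∀ a ∈ A,
      Equiv.Perm.sign (MulAction.toPermHom G (G ⧸ Subgroup.zpowers x) a) = 1) :
    indepNum (cayley G (derQ G (Subgroup.zpowers x))) = 2 ∧
    ∃ D : Set G, D ⊆ derQ G (Subgroup.zpowers x) ∧ (∀ d ∈ D, d⁻¹ ∈ D) ∧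
      indepNum (cayley G (derQ G (Subgroup.zpowers x) \ D)) = 3 := by
  classical
  have hD : IsGeneralizedDihedral A x := ⟨hindex, hxA, hconj⟩
  have : IsMulCommutative A := .of_comm fun a b => Subtype.ext (hcomm _ a.2 _ b.2)
  refine ⟨hD.indepNum_cayley_derQ, hD.exists_indepNum_cayley_diff_eq_three_of_sign hEven hA2 ?_⟩
  intro a
  rw [← sign_toPermHom_quotient_of_isComplement' hD.isComplement' a]
  exact hAlt a a.2

/-- Let `n` be even and `A` an abelian group of order `n` that is not an
elementary abelian 2-group, and let `G = D(A)` (presented abstractly) act on the `n` left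
cosets of `H = ⟨x⟩`, in such a way that every permutation of the cosets induced by an
element of `A` is even (`A ≤ Alt(n)`). Then `α(Γ_G) = 2` and there is an inverse-closed
`D ⊆ Der(G)` with `α(Cay(G, Der(G) \ D)) = 3`. -/
theorem stmt_17 {G : Type*} [Group G] [Fintype G]
    (A : Subgroup G) (hcomm : ∀ a ∈ A, ∀ b ∈ A, a * b = b * a)
    (hEven : Even (Nat.card A)) (hA2 : ∃ a ∈ A, a ^ 2 ≠ 1)
    (x : G) (hx2 : x ^ 2 = 1) (hxA : x ∉ A) (hindex : A.index = 2)
    (hconj : ∀ a ∈ A, x * a * x = a⁻¹)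
    [Fintype (G ⧸ Subgroup.zpowers x)] [DecidableEq (G ⧸ Subgroup.zpowers x)]
    (hAlt : ∀ a ∈ A,
      Equiv.Perm.sign (MulAction.toPermHom G (G ⧸ Subgroup.zpowers x) a) = 1) :
    indepNum (cayley G (derQ G (Subgroup.zpowers x))) = 2 ∧
    ∃ D : Set G, D ⊆ derQ G (Subgroup.zpowers x) ∧ (∀ d ∈ D, d⁻¹ ∈ D) ∧
      indepNum (cayley G (derQ G (Subgroup.zpowers x) \ D)) = 3 :=
  stmt_17_general A hcomm hEven hA2 x hxA hindex hconj hAlt
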